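/- arXiv:1709.07402 — 2 statements merged into one kernel-verified Lean document; each statement's English description precedes it below -/
import Mathlib

section
/- Fix n and k, l ≤ n. Let Q_k = {x ∈ ℝⁿ : x_i ≥ 0 for all i ≤ k} and Q_l = {x ∈ ℝⁿ : x_i ≥ 0 for all i ≤ l}. Let U ⊆ Q_k and V ⊆ Q_l be open in the subspace topologies of Q_k and Q_l respectively, and let φ : U → V be a bijection such that φ is infinitely differentiable on U (all derivatives taken within U, i.e., ContDiffOn of order ∞ on U) and φ⁻¹ is infinitely differentiable on V (within V). Then φ preserves depth: for every x ∈ U, the number of indices i ≤ k with x_i = 0 equals the number of indices i ≤ l with φ(x)_i = 0. -/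
open Set Filter Topology

/-- The model corner is a uniqueness-of-derivatives set, even after intersecting
with an open set. -/
lemma corner_uniqueDiffOn (n k : ℕ) (W : Set (Fin n → ℝ)) (hW : IsOpen W) :
    UniqueDiffOn ℝ (W ∩ {x : Fin n → ℝ | ∀ i : Fin n, (i : ℕ) < k → 0 ≤ x i}) := by
  have hQ : UniqueDiffOn ℝ {x : Fin n → ℝ | ∀ i : Fin n, (i : ℕ) < k → 0 ≤ x i} := by
    apply uniqueDiffOn_convex
    · intro a ha b hb s t hs ht hst
      intro i hi
      have : 0 ≤ s * a i + t * b i :=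
        add_nonneg (mul_nonneg hs (ha i hi)) (mul_nonneg ht (hb i hi))
      simpa using this
    · refine ⟨(fun _ => 1), ?_⟩
      rw [mem_interior]
      refine ⟨{x : Fin n → ℝ | ∀ i : Fin n, 0 < x i}, ?_, ?_, ?_⟩
      · intro y hy i _; exact (hy i).le
      · have h : {x : Fin n → ℝ | ∀ i : Fin n, 0 < x i} = ⋂ i : Fin n, {x | 0 < x i} := by
          ext z; simp
        rw [h]
        exact isOpen_iInter_of_finite fun i =>
          isOpen_lt continuous_const (continuous_apply i)
      · intro i; exact one_pos
  intro x hx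
  rw [Set.inter_comm]
  exact (hQ x hx.2).inter (hW.mem_nhds hx.1)

/-- Key analytic lemma: the (within-)derivative of a smooth map between relatively open
subsets of corners maps the tangent cone of the corner at `x` into the tangent cone
of the other corner at `φ x`. -/
lemma corner_key (n k l : ℕ) (U V : Set (Fin n → ℝ)) (W : Set (Fin n → ℝ))
    (hW : IsOpen W)
    (hU : U = W ∩ {x : Fin n → ℝ | ∀ i : Fin n, (i : ℕ) < k → 0 ≤ x i})
    (hV : V ⊆ {x : Fin n → ℝ | ∀ i : Fin n, (i : ℕ) < l → 0 ≤ x i})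
    (φ : (Fin n → ℝ) → (Fin n → ℝ)) (hmaps : Set.MapsTo φ U V)
    (x : Fin n → ℝ) (hx : x ∈ U)
    (A : (Fin n → ℝ) →L[ℝ] (Fin n → ℝ)) (hA : HasFDerivWithinAt φ A U x)
    (v : Fin n → ℝ) (hv : ∀ i : Fin n, (i : ℕ) < k → x i = 0 → 0 ≤ v i) :
    ∀ i : Fin n, (i : ℕ) < l → φ x i = 0 → 0 ≤ A v i := by
  set γ : ℝ → (Fin n → ℝ) := fun t => x + t • v with hγ
  have hγ0 : γ 0 = x := by simp [hγ]
  have hxW : x ∈ W := (hU ▸ hx).1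
  have hxQ : ∀ i : Fin n, (i : ℕ) < k → 0 ≤ x i := (hU ▸ hx).2
  have htend : Tendsto γ (𝓝[>] (0 : ℝ)) (𝓝 x) := by
    have hcont : Continuous γ := by continuity
    rw [← hγ0]
    exact (hcont.tendsto 0).mono_left nhdsWithin_le_nhds
  have hev : ∀ᶠ t in 𝓝[>] (0 : ℝ), γ t ∈ U := by
    have hW' : ∀ᶠ t in 𝓝[>] (0 : ℝ), γ t ∈ W := htend (hW.mem_nhds hxW)
    have hQ' : ∀ᶠ t in 𝓝[>] (0 : ℝ), ∀ i : Fin n, (i : ℕ) < k → 0 ≤ γ t i := by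
      rw [eventually_all]
      intro i
      by_cases hik : (i : ℕ) < k
      · by_cases hxi : x i = 0
        · filter_upwards [self_mem_nhdsWithin] with t ht _
          have h1 : 0 ≤ v i := hv i hik hxi
          have : γ t i = t * v i := by simp [hγ, hxi]
          rw [this]
          exact mul_nonneg (le_of_lt ht) h1
        · have hxi' : 0 < x i := lt_of_le_of_ne (hxQ i hik) (Ne.symm hxi)
          have htendi : Tendsto (fun t => γ t i) (𝓝[>] (0 : ℝ)) (𝓝 (x i)) :=
            ((continuous_apply i).tendsto x).comp htend
          have := htendi (lt_mem_nhds hxi')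
          filter_upwards [this] with t ht _
          exact le_of_lt ht
      · filter_upwards with t ht
        exact absurd ht hik
    filter_upwards [hW', hQ'] with t h1 h2
    rw [hU]; exact ⟨h1, h2⟩
  set s : Set ℝ := Set.Ioi (0 : ℝ) ∩ γ ⁻¹' U with hs
  have hs_mem : s ∈ 𝓝[>] (0 : ℝ) := inter_mem self_mem_nhdsWithin hev
  have hns : 𝓝[s] (0 : ℝ) = 𝓝[>] (0 : ℝ) := nhdsWithin_inter_of_mem' hev
  have hγd : HasDerivWithinAt γ v s 0 := by
    have h1 : HasDerivAt (fun t : ℝ => t • v) ((1 : ℝ) • v) 0 :=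
      (hasDerivAt_id (0 : ℝ)).smul_const v
    have h2 : HasDerivAt γ ((1 : ℝ) • v) 0 := h1.const_add x
    simpa using h2.hasDerivWithinAt
  have hcomp : HasDerivWithinAt (φ ∘ γ) (A v) s 0 :=
    hA.comp_hasDerivWithinAt_of_eq 0 hγd (fun t ht => ht.2) hγ0.symm
  intro i hil hφxi
  have h1 : HasDerivWithinAt (fun t => (φ ∘ γ) t i) (A v i) s 0 := by
    have := (ContinuousLinearMap.proj (R := ℝ) (φ := fun _ : Fin n => ℝ)
      i).hasFDerivAt.comp_hasDerivWithinAt 0 hcomp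
    exact this
  rw [hasDerivWithinAt_iff_tendsto_slope] at h1
  have h0s : (0 : ℝ) ∉ s := fun h => lt_irrefl 0 (Set.mem_Ioi.mp h.1)
  rw [Set.diff_singleton_eq_self h0s, hns] at h1
  have hev2 : ∀ᶠ t in 𝓝[>] (0 : ℝ), 0 ≤ slope (fun t => (φ ∘ γ) t i) 0 t := by
    filter_upwards [hs_mem] with t ht
    have ht0 : 0 < t := Set.mem_Ioi.mp ht.1
    have hγtU : γ t ∈ U := ht.2
    have hφγt : 0 ≤ φ (γ t) i := hV (hmaps hγtU) i hil
    have : slope (fun t => (φ ∘ γ) t i) 0 t = (φ (γ t) i - φ (γ 0) i) / t := by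
      simp [slope_def_field, Function.comp]
    rw [this, hγ0, hφxi]
    exact div_nonneg (by simpa using hφγt) ht0.le
  exact ge_of_tendsto h1 hev2

/-- The subspace of vectors vanishing on a set of coordinates. -/
def vanishSub (n : ℕ) (Z : Set (Fin n)) : Submodule ℝ (Fin n → ℝ) where
  carrier := {v | ∀ i ∈ Z, v i = 0}
  add_mem' := by intro a b ha hb i hi; simp [ha i hi, hb i hi]
  zero_mem' := fun i _ => rfl
  smul_mem' := by intro c a ha i hi; simp [ha i hi]

lemma finrank_vanishSub (n : ℕ) (Z : Set (Fin n)) :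
    Module.finrank ℝ (vanishSub n Z) + Z.ncard = n := by
  classical
  have e : vanishSub n Z ≃ₗ[ℝ] ({i : Fin n // i ∉ Z} → ℝ) :=
    { toFun := fun v => fun i => v.1 i.1
      map_add' := fun a b => rfl
      map_smul' := fun c a => rfl
      invFun := fun w => ⟨fun i => if h : i ∈ Z then 0 else w ⟨i, h⟩, by
        intro i hi; simp [hi]⟩
      left_inv := by
        intro v
        apply Subtype.ext
        funext i
        by_cases h : i ∈ Z
        · simp [h, v.2 i h]
        · simp [h]
      right_inv := by
        intro w
        funext i
        simp [i.2] }
  rw [e.finrank_eq]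
  have h1 : Module.finrank ℝ ({i : Fin n // i ∉ Z} → ℝ) =
      Fintype.card {i : Fin n // i ∉ Z} := Module.finrank_pi ℝ
  rw [h1]
  have h2 : Fintype.card {i : Fin n // i ∉ Z} = (Zᶜ : Set (Fin n)).ncard := by
    rw [← Nat.card_coe_set_eq, Nat.card_eq_fintype_card]
    rfl
  rw [h2, add_comm]
  have := Set.ncard_add_ncard_compl Z
  simpa using this

/-- Transitions between corner charts preserve depth: a bijection `φ : U → V`, smooth with
smooth inverse, between relatively open subsets of the model corners
`Q_k = [0,∞)^k × ℝ^{n-k}` and `Q_l = [0,∞)^l × ℝ^{n-l}`, preserves the number of vanishing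
coordinates among the first `k` (resp. `l`). -/
theorem corner_chart_transition_preserves_depth
    (n k l : ℕ) (hk : k ≤ n) (hl : l ≤ n)
    (Qk Ql : Set (Fin n → ℝ))
    (hQk : Qk = {x : Fin n → ℝ | ∀ i : Fin n, (i : ℕ) < k → 0 ≤ x i})
    (hQl : Ql = {x : Fin n → ℝ | ∀ i : Fin n, (i : ℕ) < l → 0 ≤ x i})
    (U V : Set (Fin n → ℝ))
    (hUopen : ∃ W : Set (Fin n → ℝ), IsOpen W ∧ U = W ∩ Qk)
    (hVopen : ∃ W : Set (Fin n → ℝ), IsOpen W ∧ V = W ∩ Ql)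
    (φ ψ : (Fin n → ℝ) → (Fin n → ℝ))
    (hφ : Set.BijOn φ U V)
    (hψφ : ∀ x ∈ U, ψ (φ x) = x)
    (hφψ : ∀ y ∈ V, φ (ψ y) = y)
    (hφ_smooth : ContDiffOn ℝ (⊤ : ℕ∞) φ U)
    (hψ_smooth : ContDiffOn ℝ (⊤ : ℕ∞) ψ V) :
    ∀ x ∈ U,
      {i : Fin n | (i : ℕ) < k ∧ x i = 0}.ncard =
        {i : Fin n | (i : ℕ) < l ∧ φ x i = 0}.ncard := by
  subst hQk hQl
  obtain ⟨W, hW, hU⟩ := hUopen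
  obtain ⟨W', hW', hV⟩ := hVopen
  intro x hx
  have hy : φ x ∈ V := hφ.mapsTo hx
  set y := φ x with hydef
  -- the inverse map ψ maps V to U
  have hψmaps : Set.MapsTo ψ V U := by
    intro z hz
    obtain ⟨w, hw, rfl⟩ := hφ.surjOn hz
    rw [hψφ w hw]; exact hw
  have hψx : ψ y = x := hψφ x hx
  -- unique differentiability
  have hUd : UniqueDiffOn ℝ U := hU ▸ corner_uniqueDiffOn n k W hW
  have hVd : UniqueDiffOn ℝ V := hV ▸ corner_uniqueDiffOn n l W' hW'
  -- derivatives
  set A := fderivWithin ℝ φ U x with hA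
  set B := fderivWithin ℝ ψ V y with hB
  have hAx : HasFDerivWithinAt φ A U x :=
    (hφ_smooth.differentiableOn (by simp) x hx).hasFDerivWithinAt
  have hBy : HasFDerivWithinAt ψ B V y :=
    (hψ_smooth.differentiableOn (by simp) y hy).hasFDerivWithinAt
  -- B ∘ A = id
  have hBA : ∀ w, B (A w) = w := by
    have hcomp : HasFDerivWithinAt (ψ ∘ φ) (B.comp A) U x := hBy.comp x hAx hφ.mapsTo
    have hcomp' : HasFDerivWithinAt id (B.comp A) U x :=
      hcomp.congr (fun z hz => (hψφ z hz).symm) (hψφ x hx).symm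
    have hid : HasFDerivWithinAt id (ContinuousLinearMap.id ℝ (Fin n → ℝ)) U x :=
      (hasFDerivAt_id x).hasFDerivWithinAt
    have := (hUd x hx).eq hcomp' hid
    intro w
    have := congrArg (fun (T : (Fin n → ℝ) →L[ℝ] (Fin n → ℝ)) => T w) this
    simpa using this
  have hAB : ∀ w, A (B w) = w := by
    have hcomp : HasFDerivWithinAt (φ ∘ ψ) (A.comp B) V y := by
      have := hAx
      rw [← hψx] at this
      exact this.comp y hBy hψmaps
    have hcomp' : HasFDerivWithinAt id (A.comp B) V y :=
      hcomp.congr (fun z hz => (hφψ z hz).symm) (hφψ y hy).symm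
    have hid : HasFDerivWithinAt id (ContinuousLinearMap.id ℝ (Fin n → ℝ)) V y :=
      (hasFDerivAt_id y).hasFDerivWithinAt
    have := (hVd y hy).eq hcomp' hid
    intro w
    have := congrArg (fun (T : (Fin n → ℝ) →L[ℝ] (Fin n → ℝ)) => T w) this
    simpa using this
  -- cone mapping
  have hAC : ∀ v : Fin n → ℝ, (∀ i : Fin n, (i : ℕ) < k → x i = 0 → 0 ≤ v i) →
      ∀ i : Fin n, (i : ℕ) < l → y i = 0 → 0 ≤ A v i :=
    fun v hv => corner_key n k l U V W hW hU (hV ▸ Set.inter_subset_right) φ hφ.mapsTo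
      x hx A hAx v hv
  have hBC : ∀ v : Fin n → ℝ, (∀ i : Fin n, (i : ℕ) < l → y i = 0 → 0 ≤ v i) →
      ∀ i : Fin n, (i : ℕ) < k → x i = 0 → 0 ≤ B v i := by
    intro v hv i hik hxi
    have := corner_key n l k V U W' hW' hV (hU ▸ Set.inter_subset_right) ψ hψmaps
      y hy B hBy v hv i hik (by rw [hψx]; exact hxi)
    exact this
  -- vanishing subspaces
  set Z : Set (Fin n) := {i : Fin n | (i : ℕ) < k ∧ x i = 0} with hZ
  set Z' : Set (Fin n) := {i : Fin n | (i : ℕ) < l ∧ y i = 0} with hZ'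
  have hAmem : ∀ v ∈ vanishSub n Z, A v ∈ vanishSub n Z' := by
    intro v hv i hi
    have hv1 : ∀ j : Fin n, (j : ℕ) < k → x j = 0 → 0 ≤ v j := by
      intro j hj hxj; exact le_of_eq (hv j ⟨hj, hxj⟩).symm
    have hv2 : ∀ j : Fin n, (j : ℕ) < k → x j = 0 → 0 ≤ (-v) j := by
      intro j hj hxj
      have := hv j ⟨hj, hxj⟩
      simp [this]
    have h1 := hAC v hv1 i hi.1 hi.2
    have h2 := hAC (-v) hv2 i hi.1 hi.2
    rw [map_neg] at h2
    have h2' : A v i ≤ 0 := by simpa using h2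
    exact le_antisymm h2' h1
  have hBmem : ∀ v ∈ vanishSub n Z', B v ∈ vanishSub n Z := by
    intro v hv i hi
    have hv1 : ∀ j : Fin n, (j : ℕ) < l → y j = 0 → 0 ≤ v j := by
      intro j hj hyj; exact le_of_eq (hv j ⟨hj, hyj⟩).symm
    have hv2 : ∀ j : Fin n, (j : ℕ) < l → y j = 0 → 0 ≤ (-v) j := by
      intro j hj hyj
      have := hv j ⟨hj, hyj⟩
      simp [this]
    have h1 := hBC v hv1 i hi.1 hi.2
    have h2 := hBC (-v) hv2 i hi.1 hi.2
    rw [map_neg] at h2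
    have h2' : B v i ≤ 0 := by simpa using h2
    exact le_antisymm h2' h1
  have e : vanishSub n Z ≃ₗ[ℝ] vanishSub n Z' :=
    { toFun := fun v => ⟨A v.1, hAmem v.1 v.2⟩
      map_add' := by intro a b; apply Subtype.ext; simp
      map_smul' := by intro c a; apply Subtype.ext; simp
      invFun := fun w => ⟨B w.1, hBmem w.1 w.2⟩
      left_inv := by intro v; apply Subtype.ext; exact hBA v.1
      right_inv := by intro w; apply Subtype.ext; exact hAB w.1 }
  have h1 := finrank_vanishSub n Z
  have h2 := finrank_vanishSub n Z'
  rw [e.finrank_eq] at h1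
  omega
end

section
/- Fix n and k ≤ n, let E₀ = ⋃_{i=1}^{k} {x ∈ ℝⁿ : x_i = 0}, let x ∈ ℝⁿ, and let d = #{i ≤ k : x_i = 0} be the depth of x. Let r > 0 satisfy r ≤ |x_i| for every i ≤ k with x_i ≠ 0, and let V be the open Euclidean ball of radius r around x. Then the set V \ E₀ has exactly 2^d connected components, and the closure of every connected component of V \ E₀ contains x. -/
open Set Metric

/-- Local structure of the hyperplane blowup: if `x ∈ ℝⁿ` has depth `d` (the number of
vanishing coordinates among the first `k`) and `V` is a Euclidean ball around `x` of radius
`r ≤ |x_i|` for all nonvanishing first-`k` coordinates, then `V \ E₀` has exactly `2^d`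
connected components and `x` is in the closure of each of them. -/
theorem ball_minus_hyperplanes_components
    (n k : ℕ) (hk : k ≤ n)
    (E₀ : Set (EuclideanSpace ℝ (Fin n)))
    (hE : E₀ = ⋃ i : Fin k, {y : EuclideanSpace ℝ (Fin n) | y (Fin.castLE hk i) = 0})
    (x : EuclideanSpace ℝ (Fin n))
    (d : ℕ) (hd : d = {i : Fin n | (i : ℕ) < k ∧ x i = 0}.ncard)
    (r : ℝ) (hr : 0 < r)
    (hrle : ∀ i : Fin n, (i : ℕ) < k → x i ≠ 0 → r ≤ |x i|)
    (V : Set (EuclideanSpace ℝ (Fin n))) (hV : V = Metric.ball x r) :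
    {C : Set (EuclideanSpace ℝ (Fin n)) |
        ∃ y ∈ V \ E₀, C = connectedComponentIn (V \ E₀) y}.ncard = 2 ^ d ∧
    ∀ y ∈ V \ E₀, x ∈ closure (connectedComponentIn (V \ E₀) y) := by
  classical
  subst hE hd hV
  set P : Fin n → Prop := fun i => (i : ℕ) < k ∧ x i = 0 with hP
  set E : Set (EuclideanSpace ℝ (Fin n)) :=
    ⋃ i : Fin k, {y : EuclideanSpace ℝ (Fin n) | y (Fin.castLE hk i) = 0} with hEdef
  -- the sign sets
  set S : ({i : Fin n // P i} → Bool) → Set (EuclideanSpace ℝ (Fin n)) :=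
    fun ε => Metric.ball x r ∩
      ⋂ i : {i : Fin n // P i}, {y | if ε i then 0 < y i.1 else y i.1 < 0} with hS
  -- coordinate bound inside the ball
  have habs : ∀ y ∈ Metric.ball x r, ∀ i : Fin n, |y i - x i| < r := by
    intro y hy i
    have h1 : dist y x < r := mem_ball.mp hy
    rw [EuclideanSpace.dist_eq] at h1
    have h2 : dist (y i) (x i) ^ 2 ≤ ∑ j, dist (y j) (x j) ^ 2 :=
      Finset.single_le_sum (f := fun j => dist (y j) (x j) ^ 2)
        (fun j _ => sq_nonneg _) (Finset.mem_univ i)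
    have h3 : dist (y i) (x i) ≤ Real.sqrt (∑ j, dist (y j) (x j) ^ 2) := by
      rw [show dist (y i) (x i) = Real.sqrt (dist (y i) (x i) ^ 2) by
        rw [Real.sqrt_sq dist_nonneg]]
      exact Real.sqrt_le_sqrt h2
    calc |y i - x i| = dist (y i) (x i) := (Real.dist_eq _ _).symm
      _ ≤ _ := h3
      _ < r := h1
  -- S ε is inside the ball minus E
  have hsub : ∀ ε, S ε ⊆ Metric.ball x r \ E := by
    intro ε y hy
    refine ⟨hy.1, ?_⟩
    intro hyE
    rw [hEdef, mem_iUnion] at hyE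
    obtain ⟨j, hj⟩ := hyE
    simp only [mem_setOf_eq] at hj
    set i : Fin n := Fin.castLE hk j with hi
    have hik : (i : ℕ) < k := by simp [hi]
    by_cases hxi : x i = 0
    · have hPi : P i := ⟨hik, hxi⟩
      have := mem_iInter.mp hy.2 ⟨i, hPi⟩
      simp only [mem_setOf_eq] at this
      split_ifs at this <;> rw [hj] at this <;> exact lt_irrefl _ this
    · have h1 := habs y hy.1 i
      rw [hj] at h1
      have h2 := hrle i hik hxi
      rw [abs_sub_comm, sub_zero] at h1
      linarith
  -- sign of a point
  have hcover : ∀ y ∈ Metric.ball x r \ E, y ∈ S (fun i => decide (0 < y i.1)) := by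
    intro y hy
    refine ⟨hy.1, mem_iInter.mpr fun i => ?_⟩
    have hyne : y i.1 ≠ 0 := by
      intro h0
      apply hy.2
      rw [hEdef, mem_iUnion]
      refine ⟨⟨i.1.1, i.2.1⟩, ?_⟩
      simp only [mem_setOf_eq]
      have : Fin.castLE hk ⟨i.1.1, i.2.1⟩ = i.1 := by ext; simp
      rw [this]; exact h0
    simp only [mem_setOf_eq]
    by_cases hpos : 0 < y i.1
    · simp [hpos]
    · simp only [hpos, decide_false, if_false]
      exact lt_of_le_of_ne (not_lt.mp hpos) hyne
  -- disjointness: points determine signs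
  have hdisj : ∀ ε ε' y, y ∈ S ε → y ∈ S ε' → ε = ε' := by
    intro ε ε' y h h'
    funext i
    have h1 := mem_iInter.mp h.2 i
    have h2 := mem_iInter.mp h'.2 i
    simp only [mem_setOf_eq] at h1 h2
    rcases Bool.dichotomy (ε i) with he | he <;> rcases Bool.dichotomy (ε' i) with he' | he' <;>
      rw [he] at h1 <;> rw [he'] at h2 <;> simp_all <;> linarith
  -- openness
  have hopen : ∀ ε, IsOpen (S ε) := by
    intro ε
    refine isOpen_ball.inter (isOpen_iInter_of_finite fun i => ?_)
    by_cases h : ε i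
    · simp only [h, if_true]
      exact isOpen_lt continuous_const (EuclideanSpace.proj (𝕜 := ℝ) i.1).continuous
    · simp only [h, if_false]
      exact isOpen_lt (EuclideanSpace.proj (𝕜 := ℝ) i.1).continuous continuous_const
  -- convexity
  have hconv : ∀ ε, Convex ℝ (S ε) := by
    intro ε
    refine (convex_ball x r).inter (convex_iInter fun i => ?_)
    have hlin : IsLinearMap ℝ (fun y : EuclideanSpace ℝ (Fin n) => y i.1) :=
      ⟨fun _ _ => rfl, fun _ _ => rfl⟩
    by_cases h : ε i
    · simp only [h, if_true]
      exact convex_halfSpace_gt hlin 0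
    · simp only [h, if_false]
      exact convex_halfSpace_lt hlin 0
  -- approximating points
  have hpt : ∀ ε δ, 0 < δ → δ ≤ r → ∃ p ∈ S ε, dist p x < δ := by
    intro ε δ hδ hδr
    set s : ℝ := Real.sqrt n with hs
    have hs0 : 0 ≤ s := Real.sqrt_nonneg _
    have hs2 : s ^ 2 = n := Real.sq_sqrt (Nat.cast_nonneg n)
    set c : ℝ := δ / (s + 1) with hc
    have hc0 : 0 < c := div_pos hδ (by linarith)
    set p : EuclideanSpace ℝ (Fin n) :=
      WithLp.toLp 2 (fun i => if h : P i then (if ε ⟨i, h⟩ then c else -c) else x i) with hp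
    have hdist : dist p x < δ := by
      rw [EuclideanSpace.dist_eq, Real.sqrt_lt' hδ]
      have hterm : ∀ i : Fin n, dist (p i) (x i) ^ 2 ≤ c ^ 2 := by
        intro i
        by_cases h : P i
        · have hx0 : x i = 0 := h.2
          have hpi : p i = if ε ⟨i, h⟩ then c else -c := by
            show (if h' : P i then (if ε ⟨i, h'⟩ then c else -c) else x i) = _
            rw [dif_pos h]
          rw [hpi, hx0, Real.dist_eq, sub_zero, sq_abs]
          split_ifs <;> simp [neg_sq]
        · have hpi : p i = x i := by
            show (if h' : P i then (if ε ⟨i, h'⟩ then c else -c) else x i) = _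
            rw [dif_neg h]
          rw [hpi]
          simp
          positivity
      calc ∑ i, dist (p i) (x i) ^ 2 ≤ ∑ _i : Fin n, c ^ 2 :=
            Finset.sum_le_sum fun i _ => hterm i
        _ = n * c ^ 2 := by simp [mul_comm]
        _ < δ ^ 2 := by
            have hsp : (0:ℝ) < (s + 1) ^ 2 := by positivity
            rw [hc, div_pow, ← mul_div_assoc, div_lt_iff₀ hsp]
            nlinarith [hs2, hs0, mul_pos (mul_pos hδ hδ)
              (show (0:ℝ) < 2 * s + 1 by linarith)]
    refine ⟨p, ⟨mem_ball.mpr (lt_of_lt_of_le hdist hδr), mem_iInter.mpr fun i => ?_⟩, hdist⟩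
    have hpi : p i.1 = if ε i then c else -c := by
      show (if h' : P i.1 then (if ε ⟨i.1, h'⟩ then c else -c) else x i.1) = _
      rw [dif_pos i.2]
    simp only [mem_setOf_eq, hpi]
    by_cases he : ε i
    · simp only [he, if_true]
      exact hc0
    · simp only [if_neg he]
      linarith
  -- connected components are the sign sets
  have hcc : ∀ ε, ∀ y ∈ S ε, connectedComponentIn (Metric.ball x r \ E) y = S ε := by
    intro ε y hy
    apply Subset.antisymm
    · have hvopen : IsOpen (⋃ ε' ∈ {ε' | ε' ≠ ε}, S ε') :=
        isOpen_biUnion fun ε' _ => hopen ε'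
      have hdisj2 : Disjoint (S ε) (⋃ ε' ∈ {ε' | ε' ≠ ε}, S ε') := by
        rw [Set.disjoint_left]
        intro z hz hz'
        rw [mem_iUnion₂] at hz'
        obtain ⟨ε', hne, hz'⟩ := hz'
        exact hne (hdisj ε' ε z hz' hz)
      have hsubU : connectedComponentIn (Metric.ball x r \ E) y ⊆
          S ε ∪ ⋃ ε' ∈ {ε' | ε' ≠ ε}, S ε' := by
        intro z hz
        have hzF : z ∈ Metric.ball x r \ E := connectedComponentIn_subset _ _ hz
        have := hcover z hzF
        by_cases he : (fun i => decide (0 < z i.1)) = ε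
        · left; rw [← he]; exact this
        · right; exact mem_iUnion₂.mpr ⟨_, he, this⟩
      exact (isPreconnected_connectedComponentIn).subset_left_of_subset_union
        (hopen ε) hvopen hdisj2 hsubU
        ⟨y, mem_connectedComponentIn ((hsub ε) hy), hy⟩
    · exact (hconv ε).isPreconnected.subset_connectedComponentIn hy (hsub ε)
  -- injectivity of S
  have hne : ∀ ε, (S ε).Nonempty := fun ε => by
    obtain ⟨p, hp, -⟩ := hpt ε r hr le_rfl; exact ⟨p, hp⟩
  have hinj : Function.Injective S := by
    intro ε ε' h
    obtain ⟨p, hp⟩ := hne ε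
    exact hdisj ε ε' p hp (h ▸ hp)
  -- the component set is the range of S
  have hrange : {C : Set (EuclideanSpace ℝ (Fin n)) |
      ∃ y ∈ Metric.ball x r \ E, C = connectedComponentIn (Metric.ball x r \ E) y}
      = Set.range S := by
    ext C
    constructor
    · rintro ⟨y, hy, rfl⟩
      exact ⟨_, (hcc _ y (hcover y hy)).symm⟩
    · rintro ⟨ε, rfl⟩
      obtain ⟨p, hp⟩ := hne ε
      exact ⟨p, hsub ε hp, (hcc ε p hp).symm⟩
  constructor
  · rw [hrange]
    rw [← Set.image_univ, Set.ncard_image_of_injective _ hinj, Set.ncard_univ]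
    rw [Nat.card_eq_fintype_card, Fintype.card_fun, Fintype.card_bool]
    congr 1
    rw [Set.ncard_eq_toFinset_card', Set.toFinset_card]
    exact Fintype.card_congr (Equiv.subtypeEquivRight fun i => Iff.rfl)
  · intro y hy
    rw [hcc _ y (hcover y hy)]
    rw [Metric.mem_closure_iff]
    intro δ hδ
    obtain ⟨p, hp, hpd⟩ := hpt _ (min r δ) (lt_min hr hδ) (min_le_left _ _)
    exact ⟨p, hp, by rw [dist_comm]; exact lt_of_lt_of_le hpd (min_le_right _ _)⟩
end
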